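/- arXiv:1210.3841 — 4 statements merged into one kernel-verified Lean document; each statement's English description precedes it below -/
import Mathlib

section
/- For any integers s, t, α, β, the sum over all integers j of C(s+α+j, α+j)·C(t+β−j, β−j) equals C(s+t+α+β+1, α+β). (The sum is essentially finite.) -/
/-!
Only `0 ≤ α + j` and `0 ≤ β - j` contribute, so the sum runs over the antidiagonal
`a + b = α + β` of `ℕ × ℕ`. Upper negation `C(z + k, k) = (-1)^k C(-z - 1, k)` turns each term into
`(-1)^(α+β) C(-s - 1, a) C(-t - 1, b)`, and the Chu–Vandermonde identity `Ring.add_choose_eq`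
sums these to `(-1)^(α+β) C(-s - t - 2, α + β) = C(s + t + α + β + 1, α + β)`.
-/

/-- Generalized binomial coefficient `C(s,a)` for integers `s, a`:
`C(s,a) = s(s-1)⋯(s-a+1)/a!` if `a ≥ 0`, and `0` if `a < 0`. -/
noncomputable def C (s a : ℤ) : ℚ :=
  if a < 0 then 0 else (∏ i ∈ Finset.range a.toNat, ((s : ℚ) - i)) / (a.toNat.factorial : ℚ)

open Finset

theorem C_natCast (s : ℤ) (k : ℕ) : C s k = Ring.choose (s : ℚ) k := by
  rw [Ring.choose_eq_smul, ← Polynomial.aeval_eq_smeval, Polynomial.aeval_def,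
    ← Polynomial.eval_map, descPochhammer_map, descPochhammer_eval_eq_prod_range, C,
    if_neg (by omega), smul_eq_mul, Int.toNat_natCast, inv_mul_eq_div]

theorem C_of_neg (s : ℤ) {a : ℤ} (h : a < 0) : C s a = 0 := if_pos h

namespace Ring

variable {R : Type*} [CommRing R] [BinomialRing R]

theorem choose_add_self_eq_negOnePow_smul (z : R) (k : ℕ) :
    choose (z + k) k = Int.negOnePow k • choose (-(z + 1)) k := by
  rw [choose_neg, smul_smul, ← Int.negOnePow_add, Int.negOnePow_even _ (Even.add_self _),
    one_smul, add_right_comm, add_sub_cancel_right]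

theorem sum_antidiagonal_choose_add_self (x y : R) (n : ℕ) :
    ∑ p ∈ antidiagonal n, choose (x + p.1) p.1 * choose (y + p.2) p.2 =
      choose (x + y + 1 + n) n := by
  calc ∑ p ∈ antidiagonal n, choose (x + p.1) p.1 * choose (y + p.2) p.2
      = Int.negOnePow n • ∑ p ∈ antidiagonal n, choose (-(x + 1)) p.1 * choose (-(y + 1)) p.2 := by
        rw [smul_sum]
        refine sum_congr rfl fun p hp => ?_
        rw [choose_add_self_eq_negOnePow_smul, choose_add_self_eq_negOnePow_smul,
          smul_mul_smul_comm, ← Int.negOnePow_add, ← Nat.cast_add, mem_antidiagonal.mp hp]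
    _ = Int.negOnePow n • choose (-(x + y + 1 + 1)) n := by
        rw [← add_choose_eq _ (Commute.all _ _)]
        congr 2; abel
    _ = choose (x + y + 1 + n) n := (choose_add_self_eq_negOnePow_smul _ _).symm

end Ring

section ShiftedSum

variable {M : Type*} [AddCommMonoid M] {f : ℤ → ℤ → M}

theorem finsum_add_sub_eq_zero (hf : ∀ a b, a < 0 ∨ b < 0 → f a b = 0) {α β : ℤ}
    (h : α + β < 0) : ∑ᶠ j : ℤ, f (α + j) (β - j) = 0 :=
  finsum_eq_zero_of_forall_eq_zero fun j => hf _ _ (by omega)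

theorem finsum_add_sub_eq_sum_antidiagonal (hf : ∀ a b, a < 0 ∨ b < 0 → f a b = 0)
    {α β : ℤ} {n : ℕ} (h : α + β = n) :
    ∑ᶠ j : ℤ, f (α + j) (β - j) = ∑ p ∈ antidiagonal n, f p.1 p.2 := by
  have hsupp : Function.support (fun i : ℤ => f i (n - i)) ⊆
      ↑((range (n + 1)).map (Nat.castEmbedding : ℕ ↪ ℤ)) := by
    intro i hi
    have : 0 ≤ i ∧ i ≤ n := by
      by_contra! hc
      exact hi (hf _ _ (by omega))
    simp only [coe_map, coe_range, Set.mem_image, Set.mem_Iio, Nat.castEmbedding_apply]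
    exact ⟨i.toNat, by omega, by omega⟩
  rw [← finsum_comp_equiv (Equiv.subRight α)]
  calc ∑ᶠ j : ℤ, f (α + Equiv.subRight α j) (β - Equiv.subRight α j)
      = ∑ᶠ i : ℤ, f i (n - i) := finsum_congr fun i => by
        simp only [Equiv.subRight_apply]; congr 1 <;> omega
    _ = ∑ k ∈ range (n + 1), f k (n - k : ℕ) := by
        rw [finsum_eq_sum_of_support_subset _ hsupp, sum_map]
        refine sum_congr rfl fun k hk => ?_
        rw [Nat.castEmbedding_apply, Nat.cast_sub (by simpa [Nat.lt_succ_iff] using hk)]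
    _ = ∑ p ∈ antidiagonal n, f p.1 p.2 :=
        (Nat.sum_antidiagonal_eq_sum_range_succ (fun a b => f a b) n).symm

end ShiftedSum

theorem chu_vandermonde' (s t α β : ℤ) :
    (∑ᶠ j : ℤ, C (s + α + j) (α + j) * C (t + β - j) (β - j))
      = C (s + t + α + β + 1) (α + β) := by
  set f : ℤ → ℤ → ℚ := fun a b => C (s + a) a * C (t + b) b
  have hf : ∀ a b, a < 0 ∨ b < 0 → f a b = 0 := by
    rintro a b (ha | hb)
    · simp [f, C_of_neg _ ha]
    · simp [f, C_of_neg _ hb]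
  have hsum : ∑ᶠ j : ℤ, C (s + α + j) (α + j) * C (t + β - j) (β - j) =
      ∑ᶠ j : ℤ, f (α + j) (β - j) := by
    simp only [f, add_assoc, add_sub_assoc]
  rw [hsum]
  rcases lt_or_ge (α + β) 0 with hneg | hnonneg
  · rw [finsum_add_sub_eq_zero hf hneg, C_of_neg _ hneg]
  obtain ⟨n, hn⟩ := Int.eq_ofNat_of_zero_le hnonneg
  rw [finsum_add_sub_eq_sum_antidiagonal hf hn, hn,
    show s + t + α + β + 1 = s + t + 1 + n by omega, C_natCast]
  simp only [f, C_natCast]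
  push_cast
  exact Ring.sum_antidiagonal_choose_add_self _ _ n
end

section
/- Let a, a', e, e' be integers with a ≤ e and a' ≤ e', and let k be a nonnegative integer. The number of lattice paths from (a, a') to (e, e') having exactly k NE-turns equals C(e−a, k)·C(e'−a', k). -/
/-- A lattice path from `A` to `E` is a nonempty finite sequence of points in `ℤ²`
starting at `A`, ending at `E`, each step being `(1,0)` or `(0,1)`. -/
def IsLatticePath (A E : ℤ × ℤ) (P : List (ℤ × ℤ)) : Prop :=
  P.head? = some A ∧ P.getLast? = some E ∧
    List.Chain' (fun p q : ℤ × ℤ => q - p = (1, 0) ∨ q - p = (0, 1)) P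

/-- The number of NE-turns of a lattice path `P = (P_0, …, P_t)`: indices `j` with
`0 < j < t`, `P_j - P_{j-1} = (0,1)` and `P_{j+1} - P_j = (1,0)`. -/
def numNETurns (P : List (ℤ × ℤ)) : ℕ :=
  ((Finset.range P.length).filter (fun j =>
    0 < j ∧ j + 1 < P.length ∧
      P.getD j (0, 0) - P.getD (j - 1) (0, 0) = ((0 : ℤ), (1 : ℤ)) ∧
      P.getD (j + 1) (0, 0) - P.getD j (0, 0) = ((1 : ℤ), (0 : ℤ)))).card

/-!
Encode a lattice path by its word of unit steps; an NE-turn is then an occurrence of a north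
step directly followed by an east step. Splitting off the first letter of a word shows that the
number of words with `m` east steps, `n` north steps and `k` turns satisfies, together with the
number of such words preceded by a north step, Pascal-type recurrences whose solution is
`C(m, k) * C(n, k)`.
-/

/-- `true` encodes a north step `(0,1)` and `false` an east step `(1,0)`. -/
def step (b : Bool) : ℤ × ℤ := if b then (0, 1) else (1, 0)

def pathOf (A : ℤ × ℤ) (w : List Bool) : List (ℤ × ℤ) :=
  w.scanl (fun p b => p + step b) A

section Paths

variable (A : ℤ × ℤ) (b : Bool) (w : List Bool)

lemma step_injective : Function.Injective step := by
  decide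

lemma isStep_iff (p q : ℤ × ℤ) :
    (q - p = (1, 0) ∨ q - p = (0, 1)) ↔ ∃ b, q = p + step b := by
  constructor
  · rintro (h | h)
    · exact ⟨false, by simp [step, ← h]⟩
    · exact ⟨true, by simp [step, ← h]⟩
  · rintro ⟨_ | _, rfl⟩ <;> simp [step]

@[simp] lemma pathOf_nil : pathOf A [] = [A] := List.scanl_nil

@[simp] lemma pathOf_cons : pathOf A (b :: w) = A :: pathOf (A + step b) w := List.scanl_cons

@[simp] lemma length_pathOf : (pathOf A w).length = w.length + 1 :=
  List.length_scanl ..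

@[simp] lemma pathOf_ne_nil : pathOf A w ≠ [] :=
  List.ne_nil_of_length_pos (by simp)

@[simp] lemma head?_pathOf : (pathOf A w).head? = some A := List.head?_scanl

lemma getLast?_pathOf :
    (pathOf A w).getLast? = some (A + ((w.count false : ℤ), (w.count true : ℤ))) := by
  induction w generalizing A with
  | nil => simp
  | cons b w ih =>
    rw [pathOf_cons, List.getLast?_cons, ih]
    cases b <;> simp [step, Prod.ext_iff] <;> ring

lemma isChain_pathOf :
    List.IsChain (fun p q : ℤ × ℤ => q - p = (1, 0) ∨ q - p = (0, 1)) (pathOf A w) := by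
  induction w generalizing A with
  | nil => exact List.isChain_singleton A
  | cons b w ih =>
    rw [pathOf_cons, List.isChain_cons]
    exact ⟨fun _ h => (isStep_iff _ _).2 ⟨b, by simpa using h.symm⟩, ih _⟩

lemma pathOf_injective : Function.Injective (pathOf A) := by
  intro w₁ w₂ hw
  induction w₁ generalizing w₂ A with
  | nil => cases w₂ <;> simp_all
  | cons b₁ w₁ ih =>
    cases w₂ with
    | nil => simp at hw
    | cons b₂ w₂ =>
      simp only [pathOf_cons, List.cons.injEq, true_and] at hw
      have hb : b₁ = b₂ := step_injective (by simpa using congrArg List.head? hw)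
      subst hb
      rw [ih _ hw]

lemma exists_pathOf_eq {P : List (ℤ × ℤ)}
    (hP : List.IsChain (fun p q : ℤ × ℤ => q - p = (1, 0) ∨ q - p = (0, 1)) P)
    (hA : P.head? = some A) : ∃ w, pathOf A w = P := by
  induction P generalizing A with
  | nil => simp at hA
  | cons p Q ih =>
    obtain rfl : p = A := by simpa using hA
    cases Q with
    | nil => exact ⟨[], rfl⟩
    | cons q Q =>
      obtain ⟨hstep, hQ⟩ := List.isChain_cons_cons.1 hP
      obtain ⟨b, rfl⟩ := (isStep_iff p q).1 hstep
      obtain ⟨w, hw⟩ := ih (p + step b) hQ rfl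
      exact ⟨b :: w, by rw [pathOf_cons, hw]⟩

lemma isLatticePath_iff (E : ℤ × ℤ) (P : List (ℤ × ℤ)) :
    IsLatticePath A E P ↔
      ∃ w : List Bool,
        pathOf A w = P ∧ A + ((w.count false : ℤ), (w.count true : ℤ)) = E := by
  constructor
  · rintro ⟨hA, hE, hP⟩
    obtain ⟨w, rfl⟩ := exists_pathOf_eq A hP hA
    exact ⟨w, rfl, Option.some.inj ((getLast?_pathOf A w).symm.trans hE)⟩
  · rintro ⟨w, rfl, rfl⟩
    exact ⟨head?_pathOf A w, getLast?_pathOf A w, isChain_pathOf A w⟩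

end Paths

/-- NE-turns of a step word: a north step directly followed by an east step. -/
def turns : List Bool → ℕ
  | a :: b :: l => turns (b :: l) + (a && !b).toNat
  | _ => 0

@[simp] lemma turns_nil : turns [] = 0 := rfl

@[simp] lemma turns_singleton (a : Bool) : turns [a] = 0 := rfl

@[simp] lemma turns_cons_cons (a b : Bool) (l : List Bool) :
    turns (a :: b :: l) = turns (b :: l) + (a && !b).toNat := rfl

lemma numNETurns_of_length_le_two {P : List (ℤ × ℤ)} (hP : P.length ≤ 2) :
    numNETurns P = 0 := by
  rw [numNETurns, Finset.card_eq_zero, Finset.filter_eq_empty_iff]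
  intro j _
  omega

lemma numNETurns_cons_cons_cons (p q r : ℤ × ℤ) (P : List (ℤ × ℤ)) :
    numNETurns (p :: q :: r :: P) =
      numNETurns (q :: r :: P) + if q - p = (0, 1) ∧ r - q = (1, 0) then 1 else 0 := by
  simp only [numNETurns, Finset.card_filter, List.length_cons]
  conv_lhs => rw [Finset.sum_range_succ', Finset.sum_range_succ']
  conv_rhs => rw [Finset.sum_range_succ']
  simp only [List.getD_cons_succ, List.getD_cons_zero, lt_irrefl, false_and, if_false, add_zero,
    Nat.add_sub_cancel, Nat.zero_lt_succ, true_and]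
  congr 1
  · refine Finset.sum_congr rfl fun j _ => ?_
    simp only [add_lt_add_iff_right]
  · simp

lemma numNETurns_pathOf (A : ℤ × ℤ) (w : List Bool) : numNETurns (pathOf A w) = turns w := by
  induction w generalizing A with
  | nil => exact numNETurns_of_length_le_two (by simp)
  | cons b w ih =>
    cases w with
    | nil => exact numNETurns_of_length_le_two (by simp)
    | cons c t =>
      have hturn : (if step b = (0, 1) ∧ step c = (1, 0) then 1 else 0) = (b && !c).toNat := by
        cases b <;> cases c <;> simp [step]
      rw [turns_cons_cons, ← ih (A + step b), ← hturn]
      cases t <;> simp [numNETurns_cons_cons_cons]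

@[simp] lemma turns_false_cons (w : List Bool) : turns (false :: w) = turns w := by
  cases w <;> simp

lemma turns_true_cons_pos {w : List Bool} (hw : false ∈ w) : 0 < turns (true :: w) := by
  induction w with
  | nil => simp at hw
  | cons b t ih => cases b <;> simp_all

@[simp] lemma turns_replicate_true (n : ℕ) : turns (List.replicate n true) = 0 := by
  induction n with
  | zero => rfl
  | succ n ih => cases n <;> simp_all [List.replicate_succ]

def wordsWithTurns (m n k : ℕ) : Set (List Bool) :=
  {w | w.count false = m ∧ w.count true = n ∧ turns w = k}

lemma wordsWithTurns_finite (m n k : ℕ) : (wordsWithTurns m n k).Finite := by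
  refine (List.finite_length_eq Bool (m + n)).subset ?_
  rintro w ⟨hm, hn, -⟩
  simp [← hm, ← hn, List.count_false_add_count_true]

lemma ncard_eq_ncard_cons_add_ncard_cons {S : Set (List Bool)} (hS : S.Finite) (hnil : [] ∉ S) :
    S.ncard = {w | false :: w ∈ S}.ncard + {w | true :: w ∈ S}.ncard := by
  have hsplit :
      S = (false :: ·) '' {w | false :: w ∈ S} ∪ (true :: ·) '' {w | true :: w ∈ S} := by
    ext (_ | ⟨_ | _, w⟩) <;> simp [hnil]
  have hfin (b : Bool) : {w | b :: w ∈ S}.Finite := hS.preimage List.cons_injective.injOn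
  nth_rw 1 [hsplit]
  rw [Set.ncard_union_eq _ ((hfin false).image _) ((hfin true).image _),
    Set.ncard_image_of_injective _ List.cons_injective,
    Set.ncard_image_of_injective _ List.cons_injective]
  rw [Set.disjoint_left]
  rintro _ ⟨_, -, rfl⟩ ⟨_, -, h⟩
  simp at h

lemma mem_wordsWithTurns_zero_east {n k : ℕ} {w : List Bool} :
    w ∈ wordsWithTurns 0 n k ↔ w = List.replicate n true ∧ k = 0 := by
  constructor
  · rintro ⟨hm, hn, rfl⟩
    have hlen : w.length = n := by rw [← hn, ← List.count_false_add_count_true, hm, zero_add]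
    have htrue : ∀ b ∈ w, b = true := by
      rintro (_ | _) hb
      · exact absurd hb (List.count_eq_zero.1 hm)
      · rfl
    obtain rfl := List.eq_replicate_iff.2 ⟨hlen, htrue⟩
    simp
  · rintro ⟨rfl, rfl⟩
    simp [wordsWithTurns, List.count_replicate]

lemma ncard_wordsWithTurns_zero_east (n k : ℕ) :
    (wordsWithTurns 0 n k).ncard = Nat.choose 0 k * Nat.choose n k := by
  rcases k with _ | k
  · simp [Set.ncard_eq_one, Set.ext_iff, mem_wordsWithTurns_zero_east]
  · have hempty : wordsWithTurns 0 n (k + 1) = ∅ := by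
      ext
      simp [mem_wordsWithTurns_zero_east]
    simp [hempty]

def wordsAfterNorth (m n k : ℕ) : Set (List Bool) :=
  {w | true :: w ∈ wordsWithTurns m n k}

lemma ncard_wordsWithTurns_succ_east (m n k : ℕ) :
    (wordsWithTurns (m + 1) n k).ncard =
      (wordsWithTurns m n k).ncard + (wordsAfterNorth (m + 1) n k).ncard := by
  rw [ncard_eq_ncard_cons_add_ncard_cons (wordsWithTurns_finite _ _ _) (by simp [wordsWithTurns])]
  congr 2
  ext w
  simp [wordsWithTurns]

lemma wordsAfterNorth_zero_north (m k : ℕ) : wordsAfterNorth m 0 k = ∅ := by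
  ext w
  simp [wordsAfterNorth, wordsWithTurns]

lemma wordsAfterNorth_zero_turns (m n : ℕ) : wordsAfterNorth (m + 1) n 0 = ∅ := by
  ext w
  simp only [Set.mem_empty_iff_false, iff_false]
  rintro ⟨hm, -, hk⟩
  refine (turns_true_cons_pos (List.count_pos_iff.1 ?_)).ne' hk
  simp_all

lemma ncard_wordsAfterNorth_succ (m n k : ℕ) :
    (wordsAfterNorth (m + 1) (n + 1) (k + 1)).ncard =
      (wordsWithTurns m n k).ncard + (wordsAfterNorth (m + 1) n (k + 1)).ncard := by
  rw [ncard_eq_ncard_cons_add_ncard_cons ?finite (by simp [wordsAfterNorth, wordsWithTurns])]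
  · congr 2 <;> ext w <;> simp [wordsAfterNorth, wordsWithTurns]
  · exact (wordsWithTurns_finite _ _ _).preimage List.cons_injective.injOn

theorem ncard_wordsWithTurns (m n k : ℕ) :
    (wordsWithTurns m n k).ncard = m.choose k * n.choose k := by
  induction m generalizing n k with
  | zero => exact ncard_wordsWithTurns_zero_east n k
  | succ m ih =>
    rw [ncard_wordsWithTurns_succ_east, ih]
    rcases k with _ | k
    · simp [wordsAfterNorth_zero_turns]
    · have hnorth (n : ℕ) :
          (wordsAfterNorth (m + 1) n (k + 1)).ncard = m.choose k * n.choose (k + 1) := by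
        induction n with
        | zero => simp [wordsAfterNorth_zero_north]
        | succ n ihn =>
          rw [ncard_wordsAfterNorth_succ, ih, ihn, Nat.choose_succ_succ' n]
          ring
      rw [hnorth, Nat.choose_succ_succ' m]
      ring

lemma latticePaths_with_turns_eq_image (A E : ℤ × ℤ) (k : ℕ) :
    {P | IsLatticePath A E P ∧ numNETurns P = k} =
      pathOf A '' {w | A + ((w.count false : ℤ), (w.count true : ℤ)) = E ∧ turns w = k} := by
  ext P
  simp only [Set.mem_ofPred_eq, isLatticePath_iff, Set.mem_image]
  constructor
  · rintro ⟨⟨w, rfl, hE⟩, rfl⟩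
    exact ⟨w, ⟨hE, (numNETurns_pathOf A w).symm⟩, rfl⟩
  · rintro ⟨w, ⟨hE, rfl⟩, rfl⟩
    exact ⟨⟨w, rfl, hE⟩, numNETurns_pathOf A w⟩

theorem card_latticePaths_with_turns (a a' e e' : ℤ) (h : a ≤ e) (h' : a' ≤ e') (k : ℕ) :
    Nat.card {P : List (ℤ × ℤ) // IsLatticePath (a, a') (e, e') P ∧ numNETurns P = k}
      = Nat.choose (e - a).toNat k * Nat.choose (e' - a').toNat k := by
  have hwords : {w : List Bool |
      (a, a') + ((w.count false : ℤ), (w.count true : ℤ)) = (e, e') ∧ turns w = k} =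
        wordsWithTurns (e - a).toNat (e' - a').toNat k := by
    ext w
    simp only [wordsWithTurns, Set.mem_ofPred_eq, Prod.mk_add_mk, Prod.mk.injEq]
    omega
  calc Nat.card {P : List (ℤ × ℤ) // IsLatticePath (a, a') (e, e') P ∧ numNETurns P = k}
      = Nat.card (pathOf (a, a') '' wordsWithTurns (e - a).toNat (e' - a').toNat k) := by
        rw [← hwords, ← latticePaths_with_turns_eq_image]
        rfl
    _ = (wordsWithTurns (e - a).toNat (e' - a').toNat k).ncard :=
        Nat.card_image_of_injective (pathOf_injective _) _
    _ = _ := ncard_wordsWithTurns _ _ _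
end

section
/- Let m, n be integers with 2 ≤ m ≤ n. The polynomial h(z) = (Σ_{e=0}^{m−1} C(m−1,e)·C(n−1,e)·z^e)² is a palindromic polynomial (i.e., h(z) = z^{2(m−1)}·h(1/z)) if and only if m = n. -/
/-!
Write `p z = ∑ aₑ zᵉ` with `aₑ = C(m-1,e) C(n-1,e)`. Reflecting the sum gives
`z^(m-1) p(1/z) = ∑ a_{m-1-e} zᵉ`, so `h = p²` is palindromic exactly when `p²` equals the
square of the reversed polynomial. For `m = n` the coefficients `C(m-1,e)²` are symmetric, so `p`
itself is palindromic. Conversely, comparing constant terms gives `a₀² = a_{m-1}²`, i.e.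
`C(n-1,m-1) = 1`, which forces `m - 1 = n - 1` since `m - 1 ≥ 1`.
-/

open Finset Polynomial

def IsPalindromic {K : Type*} [Field K] (d : ℕ) (f : K → K) : Prop :=
  ∀ z : K, z ≠ 0 → f z = z ^ d * f z⁻¹

section
variable {K : Type*} [Field K]

theorem pow_mul_sum_range_inv_pow (a : ℕ → K) (m : ℕ) {z : K} (hz : z ≠ 0) :
    z ^ (m - 1) * ∑ e ∈ range m, a e * z⁻¹ ^ e = ∑ e ∈ range m, a (m - 1 - e) * z ^ e := by
  rw [← sum_range_reflect, mul_sum]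
  refine sum_congr rfl fun e he => ?_
  have hsplit : z ^ (m - 1) = z ^ (m - 1 - e) * z ^ e := by
    rw [← pow_add, Nat.sub_add_cancel (Nat.le_sub_one_of_lt (mem_range.mp he))]
  rw [hsplit, inv_pow]
  field_simp

theorem IsPalindromic.pow {d : ℕ} {f : K → K} (hf : IsPalindromic d f) (k : ℕ) :
    IsPalindromic (k * d) (fun z => f z ^ k) := fun z hz => by
  simp only [hf z hz, mul_pow, mul_comm k, pow_mul]

theorem isPalindromic_sum_range_of_symm {a : ℕ → K} {m : ℕ}
    (ha : ∀ e < m, a (m - 1 - e) = a e) :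
    IsPalindromic (m - 1) (fun z => ∑ e ∈ range m, a e * z ^ e) := fun z hz => by
  rw [pow_mul_sum_range_inv_pow a m hz]
  exact sum_congr rfl fun e he => by rw [ha e (mem_range.mp he)]

theorem Polynomial.eq_of_eval_eq_of_ne_zero [Infinite K] {p q : K[X]}
    (h : ∀ z : K, z ≠ 0 → p.eval z = q.eval z) : p = q :=
  eq_of_infinite_eval_eq p q <|
    (Set.finite_singleton (0 : K)).infinite_compl.mono fun z hz => h z hz

theorem IsPalindromic.sq_eq_sq [Infinite K] {a : ℕ → K} {m : ℕ}
    (h : IsPalindromic (2 * (m - 1)) (fun z => (∑ e ∈ range m, a e * z ^ e) ^ 2)) :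
    a 0 ^ 2 = a (m - 1) ^ 2 := by
  obtain _ | m := m
  · rfl
  let P : K[X] := ∑ e ∈ range (m + 1), C (a e) * X ^ e
  let Q : K[X] := ∑ e ∈ range (m + 1), C (a (m + 1 - 1 - e)) * X ^ e
  have hPQ : P ^ 2 = Q ^ 2 := Polynomial.eq_of_eval_eq_of_ne_zero fun z hz => by
    have hz' := h z hz
    dsimp only at hz'
    simp only [P, Q, eval_pow, eval_finsetSum, eval_mul, eval_C, eval_X]
    rw [hz', mul_comm 2, pow_mul, ← mul_pow, pow_mul_sum_range_inv_pow a _ hz]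
  simpa [P, Q, sum_range_succ', eval_finsetSum] using congr_arg (eval 0) hPQ
end

theorem palindromic_iff_gorenstein_general (m n : ℕ) (hm : 2 ≤ m)
    (h : ℚ → ℚ)
    (hh : ∀ z : ℚ, h z =
      (∑ e ∈ Finset.range m, (Nat.choose (m - 1) e : ℚ) * (Nat.choose (n - 1) e : ℚ) * z ^ e) ^ 2) :
    (∀ z : ℚ, z ≠ 0 → h z = z ^ (2 * (m - 1)) * h z⁻¹) ↔ m = n := by
  obtain rfl : h = _ := funext hh
  change IsPalindromic _ _ ↔ _
  constructor
  · intro hpal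
    have hsq := hpal.sq_eq_sq
    simp only [Nat.choose_zero_right, Nat.choose_self, Nat.cast_one, one_mul] at hsq
    have hchoose : (n - 1).choose (m - 1) = 1 := by
      exact_mod_cast (pow_eq_one_iff_of_nonneg (Nat.cast_nonneg _) two_ne_zero).mp hsq.symm
    rcases Nat.choose_eq_one_iff.mp hchoose with h0 | heq <;> omega
  · rintro rfl
    exact (isPalindromic_sum_range_of_symm fun e he => by
      rw [Nat.choose_symm (Nat.le_sub_one_of_lt he)]).pow 2

theorem palindromic_iff_gorenstein (m n : ℕ) (hm : 2 ≤ m) (hmn : m ≤ n)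
    (h : ℚ → ℚ)
    (hh : ∀ z : ℚ, h z =
      (∑ e ∈ Finset.range m, (Nat.choose (m - 1) e : ℚ) * (Nat.choose (n - 1) e : ℚ) * z ^ e) ^ 2) :
    (∀ z : ℚ, z ≠ 0 → h z = z ^ (2 * (m - 1)) * h z⁻¹) ↔ m = n :=
  palindromic_iff_gorenstein_general m n hm h hh
end

section
/- Let m, n be integers with 2 < m ≤ n. The rational function H(z) = (Σ_{e=0}^{m−1} C(m−1,e)C(n−1,e) z^e)² / (1−z)^{2(m+n−1)} satisfies (−1)^{2(m+n−1)} H(1/z) = (Σ_{e=0}^{m−1} C(m−1,e)C(n−1,e) z^{m+n−e−1})² / (1−z)^{2(m+n−1)}; in particular the order of the pole of H at infinity is 2n, i.e., the a-invariant of the corresponding graded ring is −2n. -/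
/-!
Multiplying numerator and denominator of `P(z⁻¹) / (1 - z⁻¹)^N` by `z^N` turns the numerator into
the reversal `z^N P(z⁻¹)` of `P` within degree `N` and the denominator into `(z - 1)^N`, whose sign
`(-1)^N` is absorbed by the prefactor. With `N = m + n - 1` and exponent `2` this is the theorem.
-/

open Finset

section Reciprocity

variable {K : Type*} [Field K]

theorem sum_mul_inv_pow_mul_pow (f : ℕ → K) {m N : ℕ} (hmN : m ≤ N + 1) {z : K} (hz : z ≠ 0) :
    (∑ e ∈ range m, f e * z⁻¹ ^ e) * z ^ N = ∑ e ∈ range m, f e * z ^ (N - e) := by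
  rw [sum_mul]
  refine sum_congr rfl fun e he => ?_
  have hsplit : z ^ N = z ^ e * z ^ (N - e) := by
    rw [← pow_add, Nat.add_sub_cancel' (by have := mem_range.mp he; omega)]
  rw [hsplit, mul_assoc, ← mul_assoc (z⁻¹ ^ e), inv_pow, inv_mul_cancel₀ (pow_ne_zero _ hz),
    one_mul]

theorem neg_one_pow_mul_sum_inv_pow_div (f : ℕ → K) {m N : ℕ} (hmN : m ≤ N + 1) {z : K}
    (hz : z ≠ 0) :
    (-1) ^ N * ((∑ e ∈ range m, f e * z⁻¹ ^ e) / (1 - z⁻¹) ^ N) =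
      (∑ e ∈ range m, f e * z ^ (N - e)) / (1 - z) ^ N := by
  rcases eq_or_ne z 1 with rfl | hz1
  -- at `z = 1` both denominators are the junk value `0 ^ N`
  · rcases N.eq_zero_or_pos with rfl | hN
    · simp
    · simp [zero_pow hN.ne']
  have hden : (-1) ^ N * (1 - z⁻¹) ^ N * z ^ N = (1 - z) ^ N := by
    rw [← mul_pow, ← mul_pow]
    congr 1
    field_simp
    ring
  rw [← sum_mul_inv_pow_mul_pow f hmN hz, ← hden]
  have hz1' : 1 - z⁻¹ ≠ 0 := sub_ne_zero.mpr (by simpa [eq_comm] using hz1)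
  field_simp
  rw [← pow_mul, (even_two.mul_left N).neg_one_pow, one_mul]

theorem neg_one_pow_mul_pow_sum_inv_pow_div (f : ℕ → K) {m N : ℕ} (hmN : m ≤ N + 1) {z : K}
    (hz : z ≠ 0) (k : ℕ) :
    (-1) ^ (k * N) * ((∑ e ∈ range m, f e * z⁻¹ ^ e) ^ k / (1 - z⁻¹) ^ (k * N)) =
      (∑ e ∈ range m, f e * z ^ (N - e)) ^ k / (1 - z) ^ (k * N) := by
  rw [mul_comm k N, pow_mul, pow_mul, pow_mul, ← div_pow, ← mul_pow,
    neg_one_pow_mul_sum_inv_pow_div f hmN hz, div_pow]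

end Reciprocity

theorem hilbert_series_canonical_module_general (m n : ℕ)
    (H : ℚ → ℚ)
    (hH : ∀ z : ℚ, z ≠ 1 → H z =
      (∑ e ∈ Finset.range m, (Nat.choose (m - 1) e : ℚ) * (Nat.choose (n - 1) e : ℚ) * z ^ e) ^ 2
        / (1 - z) ^ (2 * (m + n - 1))) :
    ∀ z : ℚ, z ≠ 0 → z ≠ 1 →
      (-1 : ℚ) ^ (2 * (m + n - 1)) * H z⁻¹ =
        (∑ e ∈ Finset.range m,
            (Nat.choose (m - 1) e : ℚ) * (Nat.choose (n - 1) e : ℚ) * z ^ (m + n - e - 1)) ^ 2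
          / (1 - z) ^ (2 * (m + n - 1)) := by
  intro z hz0 hz1
  rw [hH z⁻¹ (by simpa using hz1)]
  have hexp : ∀ e, m + n - e - 1 = m + n - 1 - e := fun e => by omega
  simp_rw [hexp]
  exact neg_one_pow_mul_pow_sum_inv_pow_div
    (fun e => (Nat.choose (m - 1) e : ℚ) * Nat.choose (n - 1) e) (by omega) hz0 2

theorem hilbert_series_canonical_module (m n : ℕ) (hm : 2 < m) (hmn : m ≤ n)
    (H : ℚ → ℚ)
    (hH : ∀ z : ℚ, z ≠ 1 → H z =
      (∑ e ∈ Finset.range m, (Nat.choose (m - 1) e : ℚ) * (Nat.choose (n - 1) e : ℚ) * z ^ e) ^ 2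
        / (1 - z) ^ (2 * (m + n - 1))) :
    ∀ z : ℚ, z ≠ 0 → z ≠ 1 →
      (-1 : ℚ) ^ (2 * (m + n - 1)) * H z⁻¹ =
        (∑ e ∈ Finset.range m,
            (Nat.choose (m - 1) e : ℚ) * (Nat.choose (n - 1) e : ℚ) * z ^ (m + n - e - 1)) ^ 2
          / (1 - z) ^ (2 * (m + n - 1)) :=
  hilbert_series_canonical_module_general m n H hH
end
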